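/- Let a, b, c, e ∈ ℂ. For n ∈ ℕ define S(n) := [Γ(a+c−e+1+n) Γ(b+c−e+1+n) / (Γ(c−e+1+n) Γ(a+b+c−e+1+n))] · ∑_{k=0}^∞ (a)_k (b)_k (c+n)_k / ((e)_k (a+b+c−e+1+n)_k · k!). Assume that e, c, a+c−e+1, b+c−e+1, a+b+c−e+1 are not nonpositive integers. Then for every n ∈ ℕ the defining series converges absolutely and S(n+1) − S(n) = Γ(e) Γ(a+c−e+1+n) Γ(b+c−e+1+n) / (Γ(a) Γ(b) Γ(c+1+n) Γ(c−e+2+n)). -/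

import Mathlib

/-!
Write `f = a + b + c - e + 1 + n` and `t_k(c, f)` for the terms of the balanced series
(`e + f = a + b + c + 1`). Comparing ratios of consecutive terms gives the contiguous relation
`(f - b)(f - a) t_k(c + 1, f + 1) - (f - a - b) f t_k(c, f) = (f / c) (g_{k+1} - g_k)` with
`g_k = k (k + e - 1) t_k(c, f)`, so the difference of the two series telescopes to
`(f / c) lim g_k`. Euler's limit `Γ(s) = lim k^s k! / (s)_{k+1}` shows that
`k² t_k → Γ(e) Γ(f) / (Γ(a) Γ(b) Γ(c))`, the balance condition making the powers of `k`
cancel; this gives absolute convergence and the value of `lim g_k` at once.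
-/

open Complex

/-- Pochhammer symbol `(a)_k = a (a+1) ⋯ (a+k-1)`. -/
noncomputable def poch (a : ℂ) (k : ℕ) : ℂ := ∏ i ∈ Finset.range k, (a + i)

/-- The normalized sum `S(n)` for the nonterminating Saalschützian series. -/
noncomputable def Ssaal (a b c e : ℂ) (n : ℕ) : ℂ :=
  Complex.Gamma (a + c - e + 1 + n) * Complex.Gamma (b + c - e + 1 + n) /
      (Complex.Gamma (c - e + 1 + n) * Complex.Gamma (a + b + c - e + 1 + n)) *
    ∑' k : ℕ, poch a k * poch b k * poch (c + n) k /
      (poch e k * poch (a + b + c - e + 1 + n) k * (Nat.factorial k : ℂ))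

open Filter Topology Asymptotics

@[simp] lemma poch_zero (a : ℂ) : poch a 0 = 1 := Finset.prod_range_zero _

lemma poch_succ (a : ℂ) (k : ℕ) : poch a (k + 1) = poch a k * (a + k) :=
  Finset.prod_range_succ _ _

lemma add_natCast_ne_zero {x : ℂ} (hx : ∀ m : ℕ, x ≠ -m) (j : ℕ) : x + j ≠ 0 :=
  fun h => hx j (eq_neg_of_add_eq_zero_left h)

lemma add_natCast_ne_neg_natCast {x : ℂ} (hx : ∀ m : ℕ, x ≠ -m) (n : ℕ) :
    ∀ m : ℕ, x + n ≠ -m := fun m h => hx (n + m) (by push_cast; linear_combination h)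

lemma poch_ne_zero {a : ℂ} (ha : ∀ m : ℕ, a ≠ -m) (k : ℕ) : poch a k ≠ 0 :=
  Finset.prod_ne_zero_iff.mpr fun i _ => add_natCast_ne_zero ha i

lemma poch_neg_natCast_eq_zero {m k : ℕ} (hk : m < k) : poch (-m) k = 0 :=
  Finset.prod_eq_zero (Finset.mem_range.mpr hk) (neg_add_cancel _)

lemma poch_add_one_mul (a : ℂ) (k : ℕ) : poch (a + 1) k * a = poch a k * (a + k) := by
  induction k with
  | zero => simp
  | succ k ih => rw [poch_succ, poch_succ]; push_cast; linear_combination (a + 1 + k) * ih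

/-- `(Gamma a)⁻¹` is the entire function `1 / Γ`: at a pole `-m`, `0⁻¹ = 0` matches
`poch (-m) k = 0` for `k > m`. -/
theorem tendsto_poch_div_factorial_mul_cpow (a : ℂ) :
    Tendsto (fun k : ℕ => poch a k / (k.factorial * (k : ℂ) ^ (a - 1))) atTop
      (𝓝 (Gamma a)⁻¹) := by
  by_cases ha : ∃ m : ℕ, a = -m
  · obtain ⟨m, rfl⟩ := ha
    rw [Gamma_neg_nat_eq_zero, inv_zero]
    refine tendsto_const_nhds.congr' ?_
    filter_upwards [eventually_gt_atTop m] with k hk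
    rw [poch_neg_natCast_eq_zero hk, zero_div]
  · push Not at ha
    have h := (tendsto_natCast_div_add_atTop a).mul
      ((GammaSeq_tendsto_Gamma a).inv₀ (Gamma_ne_zero ha))
    rw [one_mul] at h
    refine h.congr' ?_
    filter_upwards [eventually_ne_atTop 0] with k hk
    have hk' : (k : ℂ) ≠ 0 := Nat.cast_ne_zero.mpr hk
    have hGammaSeq : GammaSeq a k = k ^ a * k.factorial / (poch a k * (a + k)) := by
      rw [GammaSeq, ← poch_succ]; rfl
    rw [hGammaSeq, cpow_sub _ _ hk', cpow_one, add_comm (k : ℂ) a]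
    have hak := add_natCast_ne_zero ha k
    have hpow : (k : ℂ) ^ a ≠ 0 := by simp [cpow_eq_zero_iff, hk']
    field_simp

theorem summable_norm_of_tendsto_sq_mul {u : ℕ → ℂ} {L : ℂ}
    (h : Tendsto (fun k : ℕ => (k : ℂ) ^ 2 * u k) atTop (𝓝 L)) :
    Summable fun k => ‖u k‖ := by
  have hO := (h.isBigO_one ℂ).mul (isBigO_refl (fun k : ℕ => ((k : ℂ) ^ 2)⁻¹) atTop)
  have hu : u =O[atTop] fun k : ℕ => ((k : ℂ) ^ 2)⁻¹ := by
    refine hO.congr' ?_ ?_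
    · filter_upwards [eventually_ne_atTop 0] with k hk
      field_simp
    · simp
  refine summable_of_isBigO_nat ?_ hu.norm_left.norm_right
  simp [Real.summable_nat_pow_inv]

theorem tsum_sub_eq_sub_of_tendsto {E : Type*} [AddCommGroup E] [TopologicalSpace E]
    [IsTopologicalAddGroup E] [T2Space E] {g : ℕ → E} {L : E}
    (hs : Summable fun k => g (k + 1) - g k) (hg : Tendsto g atTop (𝓝 L)) :
    ∑' k, (g (k + 1) - g k) = L - g 0 := by
  refine tendsto_nhds_unique ?_ (hg.sub_const (g 0))
  simpa only [Finset.sum_range_sub] using hs.hasSum.tendsto_sum_nat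

lemma inv_Gamma_eq_mul_inv_Gamma_add_one (s : ℂ) : (Gamma s)⁻¹ = s * (Gamma (s + 1))⁻¹ := by
  rcases eq_or_ne s 0 with rfl | hs
  · simp [Gamma_zero]
  · rw [Gamma_add_one s hs, mul_inv, ← mul_assoc, mul_inv_cancel₀ hs, one_mul]

noncomputable def hypergeomTerm (a b c e f : ℂ) (k : ℕ) : ℂ :=
  poch a k * poch b k * poch c k / (poch e k * poch f k * (Nat.factorial k : ℂ))

noncomputable def normalizedBalancedSum (a b c e f : ℂ) : ℂ :=
  Gamma (f - b) * Gamma (f - a) / (Gamma (f - a - b) * Gamma f) *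
    ∑' k, hypergeomTerm a b c e f k

section Balanced

variable {a b c e f : ℂ}

theorem tendsto_sq_mul_hypergeomTerm (hbal : e + f = a + b + c + 1)
    (he : ∀ m : ℕ, e ≠ -m) (hf : ∀ m : ℕ, f ≠ -m) :
    Tendsto (fun k : ℕ => (k : ℂ) ^ 2 * hypergeomTerm a b c e f k) atTop
      (𝓝 (Gamma e * Gamma f / (Gamma a * Gamma b * Gamma c))) := by
  have hlim := (((tendsto_poch_div_factorial_mul_cpow a).mul
    (tendsto_poch_div_factorial_mul_cpow b)).mul (tendsto_poch_div_factorial_mul_cpow c)).div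
    ((tendsto_poch_div_factorial_mul_cpow e).mul (tendsto_poch_div_factorial_mul_cpow f))
    (mul_ne_zero (inv_ne_zero (Gamma_ne_zero he)) (inv_ne_zero (Gamma_ne_zero hf)))
  rw [show (Gamma a)⁻¹ * (Gamma b)⁻¹ * (Gamma c)⁻¹ / ((Gamma e)⁻¹ * (Gamma f)⁻¹)
      = Gamma e * Gamma f / (Gamma a * Gamma b * Gamma c) by
    simp only [div_eq_mul_inv, mul_inv, inv_inv]; ring] at hlim
  refine hlim.congr' ?_
  filter_upwards [eventually_ne_atTop 0] with k hk
  have hk' : (k : ℂ) ≠ 0 := Nat.cast_ne_zero.mpr hk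
  have hbalpow : (k : ℂ) ^ (a - 1) * k ^ (b - 1) * k ^ (c - 1) * k ^ 2
      = k ^ (e - 1) * k ^ (f - 1) := by
    rw [← cpow_natCast, ← cpow_add _ _ hk', ← cpow_add _ _ hk', ← cpow_add _ _ hk',
      ← cpow_add _ _ hk']
    congr 1
    push_cast
    linear_combination -hbal
  have hpow : ∀ x : ℂ, (k : ℂ) ^ x ≠ 0 := fun x => by simp [cpow_eq_zero_iff, hk']
  simp only [hypergeomTerm, Pi.div_apply]
  field_simp [hpow, poch_ne_zero he k, poch_ne_zero hf k,
    Nat.cast_ne_zero.mpr k.factorial_ne_zero]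
  linear_combination -(poch a k * poch b k * poch c k) * hbalpow

lemma hypergeomTerm_succ (he : ∀ m : ℕ, e ≠ -m) (hf : ∀ m : ℕ, f ≠ -m) (k : ℕ) :
    hypergeomTerm a b c e f (k + 1) = hypergeomTerm a b c e f k *
      ((a + k) * (b + k) * (c + k) / ((e + k) * (f + k) * (k + 1))) := by
  simp only [hypergeomTerm, poch_succ, Nat.factorial_succ]
  push_cast
  field_simp [poch_ne_zero he k, poch_ne_zero hf k, add_natCast_ne_zero he k,
    add_natCast_ne_zero hf k, Nat.cast_add_one_ne_zero k]

lemma hypergeomTerm_add_one_add_one (hc : c ≠ 0) (hf : ∀ m : ℕ, f ≠ -m) (k : ℕ) :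
    hypergeomTerm a b (c + 1) e (f + 1) k =
      hypergeomTerm a b c e f k * ((c + k) * f / ((f + k) * c)) := by
  have hf0 : f ≠ 0 := by simpa using add_natCast_ne_zero hf 0
  have hc1 : poch (c + 1) k = poch c k * (c + k) / c :=
    eq_div_of_mul_eq hc (poch_add_one_mul c k)
  have hf1 : poch (f + 1) k = poch f k * (f + k) / f :=
    eq_div_of_mul_eq hf0 (poch_add_one_mul f k)
  simp only [hypergeomTerm, hc1, hf1]
  field_simp [poch_ne_zero hf k, add_natCast_ne_zero hf k]

lemma hypergeomTerm_contiguous (hbal : e + f = a + b + c + 1) (he : ∀ m : ℕ, e ≠ -m)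
    (hf : ∀ m : ℕ, f ≠ -m) (hc : c ≠ 0) (k : ℕ) :
    c * ((f - b) * (f - a) * hypergeomTerm a b (c + 1) e (f + 1) k
        - (f - a - b) * f * hypergeomTerm a b c e f k)
      = f * ((k + 1) * (k + e) * hypergeomTerm a b c e f (k + 1)
        - k * (k + e - 1) * hypergeomTerm a b c e f k) := by
  rw [hypergeomTerm_succ he hf, hypergeomTerm_add_one_add_one hc hf]
  field_simp [add_natCast_ne_zero he k, add_natCast_ne_zero hf k, Nat.cast_add_one_ne_zero k]
  rw [show e = a + b + c + 1 - f by linear_combination hbal]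
  ring

theorem tsum_hypergeomTerm_contiguous (hbal : e + f = a + b + c + 1)
    (he : ∀ m : ℕ, e ≠ -m) (hf : ∀ m : ℕ, f ≠ -m) (hc : c ≠ 0) :
    (f - b) * (f - a) * ∑' k, hypergeomTerm a b (c + 1) e (f + 1) k
        - (f - a - b) * f * ∑' k, hypergeomTerm a b c e f k
      = f / c * (Gamma e * Gamma f / (Gamma a * Gamma b * Gamma c)) := by
  have hlim := tendsto_sq_mul_hypergeomTerm hbal he hf
  have hsum := (summable_norm_of_tendsto_sq_mul hlim).of_norm
  have hf1 : ∀ m : ℕ, f + 1 ≠ -m := by simpa using add_natCast_ne_neg_natCast hf 1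
  have hsum' := (summable_norm_of_tendsto_sq_mul (tendsto_sq_mul_hypergeomTerm
    (a := a) (b := b) (c := c + 1) (by linear_combination hbal) he hf1)).of_norm
  set g : ℕ → ℂ := fun k => f / c * (k * (k + e - 1) * hypergeomTerm a b c e f k)
  have hstep : ∀ k : ℕ, (f - b) * (f - a) * hypergeomTerm a b (c + 1) e (f + 1) k
      - (f - a - b) * f * hypergeomTerm a b c e f k = g (k + 1) - g k := fun k => by
    have hrel := hypergeomTerm_contiguous hbal he hf hc k
    simp only [g]
    push_cast
    field_simp
    linear_combination hrel
  have hg :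
      Tendsto g atTop (𝓝 (f / c * (Gamma e * Gamma f / (Gamma a * Gamma b * Gamma c)))) := by
    have hratio := (tendsto_natCast_div_add_atTop (e - 1)).inv₀ one_ne_zero
    rw [inv_one] at hratio
    have hprod := (hratio.mul hlim).const_mul (f / c)
    rw [one_mul] at hprod
    refine hprod.congr' ?_
    filter_upwards [eventually_ne_atTop 0] with k hk
    have hk' : (k : ℂ) ≠ 0 := Nat.cast_ne_zero.mpr hk
    simp only [g, inv_div]
    field_simp
    ring
  rw [← tsum_mul_left, ← tsum_mul_left, ← (hsum'.mul_left _).tsum_sub (hsum.mul_left _),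
    tsum_congr hstep, tsum_sub_eq_sub_of_tendsto _ hg]
  · simp [g]
  · exact ((hsum'.mul_left _).sub (hsum.mul_left _)).congr hstep

theorem normalizedBalancedSum_add_one_sub (hbal : e + f = a + b + c + 1)
    (he : ∀ m : ℕ, e ≠ -m) (hf : ∀ m : ℕ, f ≠ -m) (hc : c ≠ 0) (hfb : f - b ≠ 0)
    (hfa : f - a ≠ 0) :
    normalizedBalancedSum a b (c + 1) e (f + 1) - normalizedBalancedSum a b c e f
      = Gamma e * Gamma (f - b) * Gamma (f - a)
          / (Gamma a * Gamma b * Gamma (c + 1) * Gamma (f - a - b + 1)) := by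
  have hf0 : f ≠ 0 := by simpa using add_natCast_ne_zero hf 0
  calc normalizedBalancedSum a b (c + 1) e (f + 1) - normalizedBalancedSum a b c e f
      = Gamma (f - b) * Gamma (f - a) / (Gamma (f - a - b + 1) * Gamma (f + 1)) *
        ((f - b) * (f - a) * ∑' k, hypergeomTerm a b (c + 1) e (f + 1) k
          - (f - a - b) * f * ∑' k, hypergeomTerm a b c e f k) := by
        rw [normalizedBalancedSum, normalizedBalancedSum,
          show f + 1 - a - b = f - a - b + 1 by ring, show f + 1 - b = f - b + 1 by ring,
          show f + 1 - a = f - a + 1 by ring,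
          Gamma_add_one _ hfb, Gamma_add_one _ hfa, div_eq_mul_inv _ (Gamma (f - a - b) * _),
          mul_inv, inv_Gamma_eq_mul_inv_Gamma_add_one (f - a - b),
          inv_Gamma_eq_mul_inv_Gamma_add_one f]
        ring
    _ = Gamma (f - b) * Gamma (f - a) / (Gamma (f - a - b + 1) * Gamma (f + 1)) *
        (f / c * (Gamma e * Gamma f / (Gamma a * Gamma b * Gamma c))) := by
        rw [tsum_hypergeomTerm_contiguous hbal he hf hc]
    _ = _ := by
        rw [Gamma_add_one _ hc, Gamma_add_one _ hf0]
        field_simp [Gamma_ne_zero hf]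

end Balanced

lemma Ssaal_eq_normalizedBalancedSum (a b c e : ℂ) (n : ℕ) :
    Ssaal a b c e n = normalizedBalancedSum a b (c + n) e (a + b + c - e + 1 + n) := by
  rw [normalizedBalancedSum, show a + b + c - e + 1 + n - a - b = c - e + 1 + n by ring,
    show a + b + c - e + 1 + n - b = a + c - e + 1 + n by ring,
    show a + b + c - e + 1 + n - a = b + c - e + 1 + n by ring]
  rfl

theorem saalschutz_S_difference (a b c e : ℂ)
    (he : ∀ m : ℕ, e ≠ -(m : ℂ)) (hc : ∀ m : ℕ, c ≠ -(m : ℂ))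
    (h1 : ∀ m : ℕ, a + c - e + 1 ≠ -(m : ℂ))
    (h2 : ∀ m : ℕ, b + c - e + 1 ≠ -(m : ℂ))
    (h3 : ∀ m : ℕ, a + b + c - e + 1 ≠ -(m : ℂ)) :
    ∀ n : ℕ,
      (Summable fun k : ℕ =>
        ‖poch a k * poch b k * poch (c + n) k /
          (poch e k * poch (a + b + c - e + 1 + n) k * (Nat.factorial k : ℂ))‖) ∧
      Ssaal a b c e (n + 1) - Ssaal a b c e n =
        Complex.Gamma e * Complex.Gamma (a + c - e + 1 + n) *
            Complex.Gamma (b + c - e + 1 + n) /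
          (Complex.Gamma a * Complex.Gamma b * Complex.Gamma (c + 1 + n) *
            Complex.Gamma (c - e + 2 + n)) := by
  intro n
  have hbal : e + (a + b + c - e + 1 + n) = a + b + (c + n) + 1 := by ring
  have hf := add_natCast_ne_neg_natCast h3 n
  refine ⟨summable_norm_of_tendsto_sq_mul (tendsto_sq_mul_hypergeomTerm hbal he hf), ?_⟩
  have hdiff := normalizedBalancedSum_add_one_sub hbal he hf (add_natCast_ne_zero hc n)
    (fun h => add_natCast_ne_zero h1 n (by linear_combination h))
    (fun h => add_natCast_ne_zero h2 n (by linear_combination h))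
  rw [Ssaal_eq_normalizedBalancedSum, Ssaal_eq_normalizedBalancedSum, Nat.cast_succ,
    ← add_assoc, ← add_assoc, hdiff]
  ring_nf
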